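/- arXiv:2603.00304 — 2 statements merged into one kernel-verified Lean document; each statement's English description precedes it below -/
import Mathlib

section
/- The burning number of the comb graph C_{n,n+2} equals n+1. -/
noncomputable def burningNumber {V : Type*} (G : SimpleGraph V) : ℕ :=
  sInf {k | ∃ v : Fin k → V, ∀ u : V, ∃ i : Fin k, G.dist (v i) u ≤ k - 1 - i.val}

def comb (n m : ℕ) : SimpleGraph (Fin n × Fin m) :=
  SimpleGraph.fromRel (fun p q =>
    (p.1 = q.1 ∧ p.2.val + 1 = q.2.val) ∨
    (p.2.val = 0 ∧ q.2.val = 0 ∧ p.1.val + 1 = q.1.val))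

namespace CombAux

open SimpleGraph

lemma comb_adj {n m : ℕ} (p q : Fin n × Fin m) :
    (comb n m).Adj p q ↔ p ≠ q ∧
      (((p.1 = q.1 ∧ p.2.val + 1 = q.2.val) ∨
        (p.2.val = 0 ∧ q.2.val = 0 ∧ p.1.val + 1 = q.1.val)) ∨
       ((q.1 = p.1 ∧ q.2.val + 1 = p.2.val) ∨
        (q.2.val = 0 ∧ p.2.val = 0 ∧ q.1.val + 1 = p.1.val))) := by
  rw [comb, SimpleGraph.fromRel_adj]

lemma adj_tooth {n m : ℕ} (a : Fin n) {b c : Fin m} (h : b.val + 1 = c.val) :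
    (comb n m).Adj (a, b) (a, c) := by
  rw [comb_adj]
  refine ⟨?_, Or.inl (Or.inl ⟨rfl, h⟩)⟩
  intro he
  have : b.val = c.val := congrArg (fun x => x.2.val) he
  omega

lemma adj_spine {n m : ℕ} {a c : Fin n} {b : Fin m} (hb : b.val = 0)
    (h : a.val + 1 = c.val) : (comb n m).Adj (a, b) (c, b) := by
  rw [comb_adj]
  refine ⟨?_, Or.inl (Or.inr ⟨hb, hb, h⟩)⟩
  intro he
  have : a.val = c.val := congrArg (fun x => x.1.val) he
  omega

lemma walk_tooth {n m : ℕ} (a : Fin n) :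
    ∀ (d : ℕ) (b c : Fin m), b.val + d = c.val →
      ∃ p : (comb n m).Walk (a, b) (a, c), p.length = d := by
  intro d
  induction d with
  | zero =>
    intro b c h
    have : b = c := Fin.ext (by omega)
    subst this
    exact ⟨.nil, rfl⟩
  | succ d ih =>
    intro b c h
    have hb1 : b.val + 1 < m := by have := c.isLt; omega
    obtain ⟨p, hp⟩ := ih ⟨b.val + 1, hb1⟩ c (by simp; omega)
    exact ⟨.cons (adj_tooth a (by simp)) p, by simp [hp]⟩

lemma walk_spine {n m : ℕ} {z : Fin m} (hz : z.val = 0) :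
    ∀ (d : ℕ) (a c : Fin n), a.val + d = c.val →
      ∃ p : (comb n m).Walk (a, z) (c, z), p.length = d := by
  intro d
  induction d with
  | zero =>
    intro a c h
    have : a = c := Fin.ext (by omega)
    subst this
    exact ⟨.nil, rfl⟩
  | succ d ih =>
    intro a c h
    have ha1 : a.val + 1 < n := by have := c.isLt; omega
    obtain ⟨p, hp⟩ := ih ⟨a.val + 1, ha1⟩ c (by simp; omega)
    exact ⟨.cons (adj_spine hz (by simp)) p, by simp [hp]⟩

lemma walk_any {n m : ℕ} (hm : 0 < m) (a c : Fin n) (b d : Fin m) :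
    ∃ p : (comb n m).Walk (a, b) (c, d),
      p.length = b.val + a.val + c.val + d.val := by
  set z : Fin m := ⟨0, hm⟩ with hz
  obtain ⟨p1, hp1⟩ := walk_tooth a b.val z b (by simp [hz])
  obtain ⟨q1, hq1⟩ := walk_spine (n := n) (show z.val = 0 from rfl) a.val ⟨0, a.pos⟩ a (by simp)
  obtain ⟨q2, hq2⟩ := walk_spine (n := n) (show z.val = 0 from rfl) c.val ⟨0, a.pos⟩ c (by simp)
  obtain ⟨p2, hp2⟩ := walk_tooth c d.val z d (by simp [hz])
  refine ⟨p1.reverse.append ((q1.reverse.append q2).append p2), ?_⟩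
  simp [hp1, hq1, hq2, hp2]
  omega

lemma comb_connected {n m : ℕ} (hn : 0 < n) (hm : 0 < m) :
    (comb n m).Connected := by
  rw [connected_iff]
  constructor
  · rintro ⟨a, b⟩ ⟨c, d⟩
    obtain ⟨p, -⟩ := walk_any hm a c b d
    exact ⟨p⟩
  · exact ⟨(⟨0, hn⟩, ⟨0, hm⟩)⟩

lemma dist_le_same_tooth {n m : ℕ} (a : Fin n) (b c : Fin m) :
    (comb n m).dist (a, b) (a, c) ≤ (c.val - b.val) + (b.val - c.val) := by
  rcases le_total b.val c.val with h | h
  · obtain ⟨p, hp⟩ := walk_tooth a (c.val - b.val) b c (by omega)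
    calc (comb n m).dist (a, b) (a, c) ≤ p.length := SimpleGraph.dist_le p
    _ = _ := by omega
  · obtain ⟨p, hp⟩ := walk_tooth a (b.val - c.val) c b (by omega)
    calc (comb n m).dist (a, b) (a, c) ≤ p.reverse.length := SimpleGraph.dist_le p.reverse
    _ = _ := by simp [hp]; omega

lemma dist_le_same_tooth' {n m : ℕ} (a c : Fin n) (b d : Fin m) (h : a = c) :
    (comb n m).dist (a, b) (c, d) ≤ (d.val - b.val) + (b.val - d.val) := by
  subst h; exact dist_le_same_tooth a b d

lemma dist_le_cross {n m : ℕ} (hm : 0 < m) (a c : Fin n) (b d : Fin m) :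
    (comb n m).dist (a, b) (c, d) ≤ b.val + a.val + c.val + d.val := by
  obtain ⟨p, hp⟩ := walk_any hm a c b d
  exact hp ▸ SimpleGraph.dist_le p

lemma abs_sub_le_walk {V : Type*} {G : SimpleGraph V} (f : V → ℤ)
    (hf : ∀ x y, G.Adj x y → |f x - f y| ≤ 1) {u v : V} (p : G.Walk u v) :
    |f u - f v| ≤ (p.length : ℤ) := by
  induction p with
  | nil => simp
  | @cons u w v h p ih =>
    have h1 := hf _ _ h
    have h2 := abs_sub_le (f u) (f w) (f v)
    simp only [SimpleGraph.Walk.length_cons]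
    push_cast
    linarith

lemma dist_lower {V : Type*} {G : SimpleGraph V} (f : V → ℤ)
    (hf : ∀ x y, G.Adj x y → |f x - f y| ≤ 1) {u v : V} (hr : G.Reachable u v) :
    |f u - f v| ≤ (G.dist u v : ℤ) := by
  obtain ⟨p, hp⟩ := hr.exists_walk_length_eq_dist
  exact hp ▸ abs_sub_le_walk f hf p

/-- potential function centered on tooth `t` -/
def fpot (n : ℕ) (t : Fin n) (p : Fin n × Fin (n + 2)) : ℤ :=
  if p.1 = t then (p.2.val : ℤ)
  else -((p.2.val : ℤ) + (((p.1.val : ℤ) - (t.val : ℤ)).natAbs : ℤ))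

lemma fpot_lip {n : ℕ} (t : Fin n) :
    ∀ x y, (comb n (n + 2)).Adj x y → |fpot n t x - fpot n t y| ≤ 1 := by
  rintro ⟨a, b⟩ ⟨c, d⟩ h
  rw [comb_adj] at h
  obtain ⟨hne, h⟩ := h
  simp only [Prod.ext_iff, not_and, Fin.ext_iff] at hne h
  rw [abs_le]
  unfold fpot
  dsimp only
  split_ifs with h1 h2 h2 <;>
    simp only [Fin.ext_iff] at h1 h2 <;>
    constructor <;> omega

lemma fpot_same (n : ℕ) (t : Fin n) (e : Fin (n + 2)) :
    fpot n t (t, e) = (e.val : ℤ) := by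
  unfold fpot
  dsimp only
  rw [if_pos rfl]

lemma fpot_other (n : ℕ) {t c : Fin n} (h : c ≠ t) (e : Fin (n + 2)) :
    fpot n t (c, e) = -((e.val : ℤ) + ((((c.val : ℤ) - (t.val : ℤ)).natAbs : ℕ) : ℤ)) := by
  unfold fpot
  dsimp only
  rw [if_neg h]

end CombAux

set_option maxHeartbeats 16000000 in
open CombAux SimpleGraph in
theorem burning_comb_succ_succ (n : ℕ) (hn : 1 ≤ n) :
    burningNumber (comb n (n + 2)) = n + 1 := by
  have hmem : (n + 1) ∈ {k | ∃ v : Fin k → Fin n × Fin (n + 2),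
      ∀ u, ∃ i : Fin k, (comb n (n + 2)).dist (v i) u ≤ k - 1 - i.val} := by
    refine ⟨fun i =>
      if h0 : i.val = 0 then (⟨0, hn⟩, ⟨1, by omega⟩)
      else if h1 : i.val = n - 1 then (⟨min 1 (n - 1), by omega⟩, ⟨n, by omega⟩)
      else if h2 : i.val = n then (⟨0, hn⟩, ⟨0, by omega⟩)
      else (⟨n - i.val, by omega⟩, ⟨i.val + 1, by have := i.isLt; omega⟩), ?_⟩
    rintro ⟨c, d⟩
    have hc := c.isLt
    have hd := d.isLt
    by_cases hc0 : c.val = 0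
    · refine ⟨⟨0, by omega⟩, ?_⟩
      simp only [dif_pos rfl]
      refine le_trans (dist_le_same_tooth' _ _ _ _ (Fin.ext ?_)) ?_ <;> dsimp only <;> omega
    · by_cases hcd : d.val + c.val ≤ n - 1
      · refine ⟨⟨0, by omega⟩, ?_⟩
        simp only [dif_pos rfl]
        refine le_trans (dist_le_cross (by omega) ⟨0, hn⟩ c ⟨1, by omega⟩ d) ?_
        dsimp only
        omega
      · by_cases hc1 : c.val = 1
        · have hn2 : 2 ≤ n := by omega
          refine ⟨⟨n - 1, by omega⟩, ?_⟩
          simp only [dif_neg (by omega : ¬ (n - 1) = 0), dif_pos rfl]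
          refine le_trans (dist_le_same_tooth' _ _ _ _ (Fin.ext ?_)) ?_ <;> dsimp only <;> omega
        · -- 2 ≤ c ≤ n-1, d + c ≥ n
          have hc2 : 2 ≤ c.val := by omega
          refine ⟨⟨n - c.val, by omega⟩, ?_⟩
          simp only [dif_neg (by omega : ¬ (n - c.val) = 0),
            dif_neg (by omega : ¬ (n - c.val) = n - 1),
            dif_neg (by omega : ¬ (n - c.val) = n)]
          refine le_trans (dist_le_same_tooth' _ _ _ _ (Fin.ext ?_)) ?_ <;> dsimp only <;> omega
  apply le_antisymm
  · exact Nat.sInf_le hmem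
  · refine le_csInf ⟨n + 1, hmem⟩ ?_
    rintro k ⟨v, hv⟩
    by_contra hlt
    push_neg at hlt
    have hk : k ≤ n := by omega
    have hconn := comb_connected (n := n) (m := n + 2) (by omega) (by omega)
    have hlt1 : n + 1 < n + 2 := by omega
    have hlt0 : n < n + 2 := by omega
    have key : ∀ (a : Fin n) (i : Fin k),
        (comb n (n + 2)).dist (v i) (a, ⟨n + 1, hlt1⟩) ≤ k - 1 - i.val →
        (v i).1 = a ∧ i.val + 2 ≤ (v i).2.val := by
      intro a i hdist
      have hr : (comb n (n + 2)).Reachable (v i) (a, ⟨n + 1, hlt1⟩) :=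
        hconn.preconnected _ _
      have hlb := dist_lower (fpot n a) (fpot_lip a) hr
      rcases hvi : v i with ⟨e1, e2⟩
      simp only [hvi] at hlb hdist
      have hdz : ((comb n (n + 2)).dist (e1, e2) (a, ⟨n + 1, hlt1⟩) : ℤ)
          ≤ ((k - 1 - i.val : ℕ) : ℤ) := by exact_mod_cast hdist
      have hik : i.val < k := i.isLt
      have he2 := e2.isLt
      by_cases he1 : e1 = a
      · refine ⟨he1, ?_⟩
        subst he1
        simp only [fpot_same, abs_le] at hlb
        dsimp only at hlb ⊢
        omega
      · exfalso
        have hne' : e1.val ≠ a.val := fun h => he1 (Fin.ext h)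
        simp only [fpot_other n he1, fpot_same, abs_le] at hlb
        omega
    choose I hI using fun a : Fin n => hv (a, ⟨n + 1, hlt1⟩)
    have htooth := fun a : Fin n => key a (I a) (hI a)
    have hinj : Function.Injective I := by
      intro a a' h
      have h1 := (htooth a).1
      have h2 := (htooth a').1
      rw [h] at h1
      rw [← h1, h2]
    have hnk : n ≤ k := by
      have := Fintype.card_le_of_injective I hinj
      simpa using this
    have hsurj : Function.Surjective I := by
      have : Function.Bijective I :=
        (Fintype.bijective_iff_injective_and_card I).mpr
          ⟨hinj, by simp [le_antisymm hk hnk]⟩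
      exact this.2
    have hklt : k - 1 < k := by omega
    obtain ⟨a0, ha0⟩ := hsurj ⟨k - 1, hklt⟩
    have h2 := htooth a0
    simp only [ha0] at h2
    have hvtip : v ⟨k - 1, hklt⟩ = (a0, ⟨n + 1, hlt1⟩) := by
      have hlt2 := (v ⟨k - 1, hklt⟩).2.isLt
      refine Prod.ext h2.1 (Fin.ext ?_)
      dsimp only at h2 ⊢
      omega
    obtain ⟨j, hj⟩ := hv (a0, ⟨n, hlt0⟩)
    have hjk : j.val < k := j.isLt
    by_cases hj1 : j = ⟨k - 1, hklt⟩
    · have hjval : j.val = k - 1 := by rw [hj1]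
      have hne2 : v j ≠ (a0, ⟨n, hlt0⟩) := by
        simp only [hj1, hvtip]
        intro h
        have h2v := congrArg (fun p : Fin n × Fin (n + 2) => p.2.val) h
        dsimp only at h2v
        omega
      have hpos := hconn.pos_dist_of_ne hne2
      omega
    · obtain ⟨a', ha'⟩ := hsurj j
      have hta' : (v j).1 = a' := by rw [← ha']; exact (htooth a').1
      have hne : a' ≠ a0 := fun he => hj1 (by rw [← ha', he, ha0])
      rcases hvj : v j with ⟨e1, e2⟩
      simp only [hvj] at hj hta'
      have he1 : e1 ≠ a0 := by
        rw [hta']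
        exact hne
      have hr : (comb n (n + 2)).Reachable (e1, e2) (a0, ⟨n, hlt0⟩) :=
        hconn.preconnected _ _
      have hlb := dist_lower (fpot n a0) (fpot_lip a0) hr
      have hdz : ((comb n (n + 2)).dist (e1, e2) (a0, ⟨n, hlt0⟩) : ℤ)
          ≤ ((k - 1 - j.val : ℕ) : ℤ) := by exact_mod_cast hj
      have hne' : e1.val ≠ a0.val := fun h => he1 (Fin.ext h)
      simp only [fpot_other n he1, fpot_same, abs_le] at hlb
      omega
end

section
/- If 1 ≤ n ≤ m, then the burning number of the comb graph C_{n,m} is at least √(nm/2). -/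
/-
A vertex at height at least `k` on a tooth is farther than `k - 1` from every other tooth, so in a
burning sequence of length `k < m` it is burned from a centre on its own tooth, and the centre of
radius `r` reaches at most `2r + 1` of these vertices. Hence `n (m - k) ≤ ∑ (2r + 1) = k²`; the
vertices at height `k` of the `n` teeth need `n` different centres, so `n ≤ k`, and together
`nm ≤ 2k²`. Distances are bounded below by functions that change by at most one along each edge:
the height, and the height along one fixed tooth (zero off that tooth).
-/

open Finset

namespace SimpleGraph

variable {V : Type*} {G : SimpleGraph V} {f : V → ℕ}

theorem Walk.apply_le_apply_add_length (hf : ∀ a b, G.Adj a b → f b ≤ f a + 1) {u v : V}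
    (w : G.Walk u v) : f v ≤ f u + w.length := by
  induction w with
  | nil => simp
  | cons h _ ih => rw [Walk.length_cons]; have := hf _ _ h; omega

theorem Reachable.apply_le_apply_add_dist (hf : ∀ a b, G.Adj a b → f b ≤ f a + 1) {u v : V}
    (h : G.Reachable u v) : f v ≤ f u + G.dist u v := by
  obtain ⟨w, hw⟩ := h.exists_walk_length_eq_dist
  exact hw ▸ w.apply_le_apply_add_length hf

def IsBurningSequence (G : SimpleGraph V) {k : ℕ} (v : Fin k → V) : Prop :=
  ∀ u, ∃ i : Fin k, G.dist (v i) u ≤ k - 1 - i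

theorem exists_isBurningSequence_burningNumber [Finite V] (G : SimpleGraph V) :
    ∃ v : Fin (burningNumber G) → V, G.IsBurningSequence v := by
  obtain ⟨N, ⟨e⟩⟩ := Finite.exists_equiv_fin V
  exact Nat.sInf_mem (s := {k | ∃ v : Fin k → V, G.IsBurningSequence v})
    ⟨N, e.symm, fun u => ⟨e u, by simp⟩⟩

end SimpleGraph

theorem Fin.sum_two_mul_sub_add_one_eq_sq (k : ℕ) :
    ∑ i : Fin k, (2 * (k - 1 - i) + 1) = k ^ 2 := by
  induction k with
  | zero => simp
  | succ k ih =>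
    rw [Fin.sum_univ_succ]
    simp_rw [Fin.val_succ, show ∀ i : ℕ, k + 1 - 1 - (i + 1) = k - 1 - i from fun i => by omega,
      ih, Fin.val_zero, Nat.add_sub_cancel, Nat.sub_zero]
    ring

namespace comb

open SimpleGraph

variable {n m : ℕ}

def toothHom (s : Fin n) : pathGraph m →g comb n m where
  toFun t := (s, t)
  map_rel' h := by
    rw [pathGraph_adj] at h
    simp only [comb, fromRel_adj, ne_eq, Prod.mk.injEq, true_and]
    omega

def spineHom (hm : 0 < m) : pathGraph n →g comb n m where
  toFun s := (s, ⟨0, hm⟩)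
  map_rel' h := by
    rw [pathGraph_adj] at h
    simp only [comb, fromRel_adj, ne_eq, Prod.mk.injEq, and_true, true_and, Fin.ext_iff]
    omega

theorem reachable (p q : Fin n × Fin m) : (comb n m).Reachable p q := by
  have hm : 0 < m := p.2.pos
  have toSpine (r : Fin n × Fin m) : (comb n m).Reachable r (r.1, ⟨0, hm⟩) :=
    (pathGraph_preconnected m r.2 ⟨0, hm⟩).map (toothHom r.1)
  exact (toSpine p).trans <|
    ((pathGraph_preconnected n p.1 q.1).map (spineHom hm)).trans (toSpine q).symm

theorem snd_le_snd_add_one_of_adj {a b : Fin n × Fin m} (h : (comb n m).Adj a b) :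
    (b.2 : ℕ) ≤ a.2 + 1 := by
  simp only [comb, fromRel_adj] at h
  omega

def toothHeight (s : Fin n) (p : Fin n × Fin m) : ℕ :=
  if p.1 = s then p.2 else 0

theorem toothHeight_le_toothHeight_add_one_of_adj (s : Fin n) {a b : Fin n × Fin m}
    (h : (comb n m).Adj a b) : toothHeight s b ≤ toothHeight s a + 1 := by
  simp only [comb, fromRel_adj] at h
  unfold toothHeight
  split_ifs <;> grind

theorem snd_le_snd_add_dist (c p : Fin n × Fin m) : (p.2 : ℕ) ≤ c.2 + (comb n m).dist c p :=
  (reachable c p).apply_le_apply_add_dist (f := fun p => p.2) fun _ _ =>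
    snd_le_snd_add_one_of_adj

theorem fst_eq_of_dist_lt_snd {c p : Fin n × Fin m} (h : (comb n m).dist c p < p.2) :
    c.1 = p.1 := by
  have := (reachable c p).apply_le_apply_add_dist
    fun _ _ => toothHeight_le_toothHeight_add_one_of_adj p.1
  by_contra hne
  simp only [toothHeight, if_pos, if_neg hne] at this
  omega

theorem card_filter_le_snd_and_dist_le (c : Fin n × Fin m) {k r : ℕ} (hr : r < k) :
    #{p | k ≤ (p.2 : ℕ) ∧ (comb n m).dist c p ≤ r} ≤ 2 * r + 1 := by
  calc #{p | k ≤ (p.2 : ℕ) ∧ (comb n m).dist c p ≤ r}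
      ≤ #(Icc ((c.2 : ℕ) - r) (c.2 + r)) := by
        refine card_le_card_of_injOn (fun p => (p.2 : ℕ)) ?_ ?_
        · intro p hp
          simp only [coe_filter, mem_univ, true_and, Set.mem_ofPred_eq] at hp
          have hp_le := snd_le_snd_add_dist c p
          have hc_le := snd_le_snd_add_dist p c
          rw [dist_comm] at hc_le
          simp only [coe_Icc, Set.mem_Icc]
          omega
        · intro a ha b hb hab
          simp only [coe_filter, mem_univ, true_and, Set.mem_ofPred_eq] at ha hb
          have ha₁ := fst_eq_of_dist_lt_snd (by omega : (comb n m).dist c a < a.2)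
          have hb₁ := fst_eq_of_dist_lt_snd (by omega : (comb n m).dist c b < b.2)
          exact Prod.ext (ha₁.symm.trans hb₁) (Fin.ext hab)
    _ ≤ 2 * r + 1 := by simp only [Nat.card_Icc]; omega

variable {k : ℕ} {v : Fin k → Fin n × Fin m}

theorem le_of_isBurningSequence (hv : (comb n m).IsBurningSequence v) (hkm : k < m) :
    n ≤ k := by
  have hcover : (univ : Finset (Fin n)) ⊆ univ.image fun i => (v i).1 := by
    intro s _
    obtain ⟨i, hi⟩ := hv (s, ⟨k, hkm⟩)
    have hfar : (comb n m).dist (v i) (s, ⟨k, hkm⟩) < k := by omega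
    exact mem_image.2 ⟨i, mem_univ _, fst_eq_of_dist_lt_snd hfar⟩
  simpa using (card_le_card hcover).trans card_image_le

theorem mul_sub_le_sq_of_isBurningSequence (hv : (comb n m).IsBurningSequence v)
    (hkm : k < m) : n * (m - k) ≤ k ^ 2 := by
  have hcover : (univ ×ˢ Ici (⟨k, hkm⟩ : Fin m)) ⊆
      univ.biUnion fun i => {p | k ≤ (p.2 : ℕ) ∧ (comb n m).dist (v i) p ≤ k - 1 - i} := by
    rintro p hp
    obtain ⟨i, hi⟩ := hv p
    simp only [mem_product, mem_Ici, Fin.le_def] at hp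
    simp only [mem_biUnion, mem_filter, mem_univ, true_and]
    exact ⟨i, hp.2, hi⟩
  calc n * (m - k) = #(univ ×ˢ Ici (⟨k, hkm⟩ : Fin m)) := by simp
    _ ≤ ∑ i, #{p | k ≤ (p.2 : ℕ) ∧ (comb n m).dist (v i) p ≤ k - 1 - i} :=
      (card_le_card hcover).trans card_biUnion_le
    _ ≤ ∑ i : Fin k, (2 * (k - 1 - i) + 1) :=
      sum_le_sum fun i _ => card_filter_le_snd_and_dist_le _ (by omega)
    _ = k ^ 2 := Fin.sum_two_mul_sub_add_one_eq_sq k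

theorem mul_le_two_mul_sq_of_isBurningSequence (hv : (comb n m).IsBurningSequence v)
    (hnm : n ≤ m) : n * m ≤ 2 * k ^ 2 := by
  rcases le_or_gt m k with hmk | hkm
  · nlinarith
  · have hn := le_of_isBurningSequence hv hkm
    have hhigh := mul_sub_le_sq_of_isBurningSequence hv hkm
    have hsplit : n * m = n * (m - k) + n * k := by
      rw [← Nat.mul_add, Nat.sub_add_cancel hkm.le]
    nlinarith

end comb

theorem burning_comb_tooth_lower_general (n m : ℕ) (hnm : n ≤ m) :
    Real.sqrt ((n : ℝ) * m / 2) ≤ (burningNumber (comb n m) : ℝ) := by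
  obtain ⟨v, hv⟩ := (comb n m).exists_isBurningSequence_burningNumber
  have hsq : (n * m : ℝ) / 2 ≤ (burningNumber (comb n m) : ℝ) ^ 2 := by
    have := comb.mul_le_two_mul_sq_of_isBurningSequence hv hnm
    rw [div_le_iff₀ two_pos]
    exact_mod_cast this.trans_eq (mul_comm _ _)
  exact Real.sqrt_le_iff.mpr ⟨by positivity, hsq⟩

theorem burning_comb_tooth_lower (n m : ℕ) (hn : 1 ≤ n) (hnm : n ≤ m) :
    Real.sqrt ((n : ℝ) * m / 2) ≤ (burningNumber (comb n m) : ℝ) :=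
  burning_comb_tooth_lower_general n m hnm
end
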